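/- Let f : Q → Q be a Lattès map with lift f̃ : 𝕋² → 𝕋², a covering map each of whose fibers has exactly d elements, with d > 1. Then the critical points of f are not periodic: if q ∈ Q is a critical point of f (f is injective on no neighborhood of q), then for every integer n ≥ 1, fⁿ(q) ≠ q. -/

import Mathlib

/-- The 2-torus `𝕋² = (ℝ/ℤ) × (ℝ/ℤ)`. -/
abbrev Torus : Type := UnitAddCircle × UnitAddCircle

/-- The equivalence relation `x ∼ -x` on the torus. -/
def negSetoid : Setoid Torus where
  r x y := x = y ∨ x = -y
  iseqv := by
    refine ⟨fun x => Or.inl rfl, fun {x y} h => ?_, fun {x y z} h1 h2 => ?_⟩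
    · rcases h with h | h
      · exact Or.inl h.symm
      · right; rw [h, neg_neg]
    · rcases h1 with h1 | h1 <;> rcases h2 with h2 | h2 <;>
        simp only [h1, h2, neg_neg] <;> tauto

/-- The quotient `Q` of the torus by `x ∼ -x` (topologically a sphere). -/
abbrev Q : Type := Quotient negSetoid

/-- The quotient (branched covering) map `π : 𝕋² → Q`. -/
def piQ : Torus → Q := Quotient.mk negSetoid

/-- The set of 2-torsion points of the torus (the four branch points of `π`,
whose images under `π` are the critical values of `π`). -/
def torsion2 : Set Torus := {z : Torus | z + z = 0}

/-!
Write `q = π z` and let `f̃` be the lift. Since `π ∘ f̃ = f ∘ π`, at every point `f̃ (-w) = ± f̃ w`;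
local injectivity of `f̃` excludes the sign `+` off the finite set `T`, so by continuity `f̃` is odd
near every point of `T`, and in particular `f̃ (T) ⊆ T`. Two cases give local injectivity of `f`
at `π z`: `z ∈ T` (because `f̃` is odd and injective near `z`), and `f̃ z ∉ T` (because then
`f̃ z` and `-f̃ z` have disjoint neighbourhoods). So a critical point `q = π z` has `z ∉ T` and
`f̃ z ∈ T`, hence `fⁿ q ∈ π (T)` for `n ≥ 1`, which forces `fⁿ q ≠ q`.
-/

open Set Function Topology
open scoped Pointwise

-- Together with connectedness, this makes the torus a `PerfectSpace`.
instance : Nontrivial UnitAddCircle := by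
  refine nontrivial_of_ne ((1 / 2 : ℝ) : UnitAddCircle) 0 ?_
  rw [Ne, AddCircle.coe_eq_zero_iff]
  rintro ⟨n, hn⟩
  rw [zsmul_eq_mul, mul_one] at hn
  have h1 : (0 : ℝ) < n := by linarith
  have h2 : (n : ℝ) < 1 := by linarith
  norm_cast at h1 h2
  omega

lemma piQ_eq_piQ_iff {x y : Torus} : piQ x = piQ y ↔ x = y ∨ x = -y :=
  Quotient.eq (r := negSetoid)

lemma piQ_surjective : Surjective piQ := Quotient.mk_surjective

lemma piQ_neg (x : Torus) : piQ (-x) = piQ x :=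
  piQ_eq_piQ_iff.mpr (Or.inr rfl)

lemma preimage_piQ_image_piQ (V : Set Torus) : piQ ⁻¹' (piQ '' V) = V ∪ -V := by
  ext w
  simp only [mem_preimage, mem_image, mem_union, mem_neg, piQ_eq_piQ_iff]
  constructor
  · rintro ⟨v, hv, rfl | rfl⟩
    · exact Or.inl hv
    · exact Or.inr ((neg_neg w).symm ▸ hv)
  · rintro (hw | hw)
    · exact ⟨w, hw, Or.inl rfl⟩
    · exact ⟨-w, hw, Or.inr rfl⟩

lemma isOpenMap_piQ : IsOpenMap piQ := fun V hV => by
  rw [← isQuotientMap_quotient_mk'.isOpen_preimage]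
  exact (preimage_piQ_image_piQ V).symm ▸ hV.union hV.neg

lemma mem_torsion2_iff_neg_eq {z : Torus} : z ∈ torsion2 ↔ -z = z :=
  neg_eq_iff_add_eq_zero.symm

lemma mem_torsion2_of_piQ_eq_piQ {z t : Torus} (h : piQ z = piQ t) (ht : t ∈ torsion2) :
    z ∈ torsion2 := by
  rcases piQ_eq_piQ_iff.mp h with rfl | rfl
  · exact ht
  · rw [mem_torsion2_iff_neg_eq] at ht ⊢
    rw [neg_neg, ht]

lemma torsion2_finite : torsion2.Finite := by
  refine ((AddCircle.finite_torsion (1 : ℝ) two_pos).prod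
    (AddCircle.finite_torsion (1 : ℝ) two_pos)).subset fun z hz => ?_
  simp only [mem_prod, mem_ofPred_eq, two_nsmul]
  exact ⟨congrArg Prod.fst hz, congrArg Prod.snd hz⟩

lemma dense_compl_torsion2 : Dense torsion2ᶜ := by
  simpa only [compl_eq_univ_sdiff] using dense_univ.sdiff_finite torsion2_finite

section Lift

variable {f : Q → Q} {g : Torus → Torus}

lemma Function.Semiconj.eq_or_eq_neg_of_piQ (h : Semiconj piQ g f) (w : Torus) :
    g (-w) = g w ∨ g (-w) = -g w :=
  piQ_eq_piQ_iff.mp (by rw [h, h, piQ_neg])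

lemma Function.Semiconj.injOn_image_piQ (h : Semiconj piQ g f) {V : Set Torus}
    (hinj : InjOn g V) (hneg : ∀ w ∈ V, ∀ w' ∈ V, g w = -g w' → piQ w = piQ w') :
    InjOn f (piQ '' V) := by
  rintro _ ⟨w, hw, rfl⟩ _ ⟨w', hw', rfl⟩ hww'
  rw [← h, ← h, piQ_eq_piQ_iff] at hww'
  rcases hww' with e | e
  · rw [hinj hw hw' e]
  · exact hneg w hw w' hw' e

lemma Function.Semiconj.exists_injOn_mem_nhds_piQ (h : Semiconj piQ g f) {V : Set Torus}
    (hV : IsOpen V) {z : Torus} (hz : z ∈ V) (hinj : InjOn g V)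
    (hneg : ∀ w ∈ V, ∀ w' ∈ V, g w = -g w' → piQ w = piQ w') :
    ∃ U ∈ 𝓝 (piQ z), InjOn f U :=
  ⟨_, isOpenMap_piQ.image_mem_nhds (hV.mem_nhds hz), h.injOn_image_piQ hinj hneg⟩

lemma Function.Semiconj.exists_odd_injOn_nhds (hg : IsLocalHomeomorph g) (h : Semiconj piQ g f)
    {t : Torus} (ht : t ∈ torsion2) :
    ∃ V : Set Torus, IsOpen V ∧ t ∈ V ∧ (∀ w ∈ V, -w ∈ V) ∧ InjOn g V ∧
      ∀ w ∈ V, g (-w) = -g w := by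
  obtain ⟨e, hte, rfl⟩ := hg t
  set V := e.source ∩ -e.source
  have hV : IsOpen V := e.open_source.inter e.open_source.neg
  have hsymm : ∀ w ∈ V, -w ∈ V := fun w hw => ⟨hw.2, by rw [mem_neg, neg_neg]; exact hw.1⟩
  have hinj : InjOn e V := e.injOn.mono inter_subset_left
  refine ⟨V, hV, ⟨hte, by rwa [mem_neg, mem_torsion2_iff_neg_eq.mp ht]⟩, hsymm, hinj, ?_⟩
  have hodd_closed : IsClosed {w | e (-w) = -e w} :=
    isClosed_eq (hg.continuous.comp continuous_neg) hg.continuous.neg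
  have hodd_off : V ∩ torsion2ᶜ ⊆ {w | e (-w) = -e w} := fun w ⟨hw, hwT⟩ =>
    (h.eq_or_eq_neg_of_piQ w).resolve_left fun heq =>
      hwT (mem_torsion2_iff_neg_eq.mpr (hinj (hsymm w hw) hw heq))
  exact fun w hw => hodd_closed.closure_subset_iff.mpr hodd_off
    (dense_compl_torsion2.open_subset_closure_inter hV hw)

lemma Function.Semiconj.mapsTo_torsion2 (hg : IsLocalHomeomorph g) (h : Semiconj piQ g f) :
    MapsTo g torsion2 torsion2 := fun t ht => by
  obtain ⟨V, -, htV, -, -, hodd⟩ := h.exists_odd_injOn_nhds hg ht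
  rw [mem_torsion2_iff_neg_eq, ← hodd t htV, mem_torsion2_iff_neg_eq.mp ht]

lemma Function.Semiconj.exists_injOn_mem_nhds_of_mem_torsion2 (hg : IsLocalHomeomorph g)
    (h : Semiconj piQ g f) {t : Torus} (ht : t ∈ torsion2) :
    ∃ U ∈ 𝓝 (piQ t), InjOn f U := by
  obtain ⟨V, hV, htV, hsymm, hinj, hodd⟩ := h.exists_odd_injOn_nhds hg ht
  refine h.exists_injOn_mem_nhds_piQ hV htV hinj fun w hw w' hw' e => ?_
  rw [← hodd w' hw'] at e
  rw [hinj hw (hsymm w' hw') e, piQ_neg]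

lemma Function.Semiconj.exists_injOn_mem_nhds_of_apply_notMem_torsion2
    (hg : IsLocalHomeomorph g) (h : Semiconj piQ g f) {z : Torus} (hz : g z ∉ torsion2) :
    ∃ U ∈ 𝓝 (piQ z), InjOn f U := by
  obtain ⟨A, B, hA, hB, hzA, hzB, hAB⟩ :=
    t2_separation fun e : g z = -g z => hz (mem_torsion2_iff_neg_eq.mpr e.symm)
  obtain ⟨e, hze, rfl⟩ := hg z
  refine h.exists_injOn_mem_nhds_piQ (e.isOpen_inter_preimage (hA.inter hB.neg))
    ⟨hze, hzA, mem_neg.mpr hzB⟩ (e.injOn.mono inter_subset_left) ?_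
  rintro w ⟨-, hwA, -⟩ w' ⟨-, -, hw'B⟩ hww'
  rw [mem_neg, ← hww'] at hw'B
  exact absurd hw'B (hAB.notMem_of_mem_left hwA)

end Lift

theorem lattes_critical_points_not_periodic_general
    (f : Q → Q)
    (ftilde : Torus → Torus) (hcov : IsCoveringMap ftilde)
    (hsemi : ∀ z : Torus, piQ (ftilde z) = f (piQ z))
    (q : Q) (hcrit : ∀ U ∈ nhds q, ¬ Set.InjOn f U)
    (n : ℕ) (hn : 1 ≤ n) :
    f^[n] q ≠ q := by
  have hg := hcov.isLocalHomeomorph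
  have h : Semiconj piQ ftilde f := hsemi
  obtain ⟨z, rfl⟩ := piQ_surjective q
  have hz : z ∉ torsion2 := fun hz => by
    obtain ⟨U, hU, hinj⟩ := h.exists_injOn_mem_nhds_of_mem_torsion2 hg hz
    exact hcrit U hU hinj
  have hgz : ftilde z ∈ torsion2 := by
    by_contra hgz
    obtain ⟨U, hU, hinj⟩ := h.exists_injOn_mem_nhds_of_apply_notMem_torsion2 hg hgz
    exact hcrit U hU hinj
  obtain ⟨m, rfl⟩ := Nat.exists_eq_add_of_le' hn
  have hgnz : ftilde^[m + 1] z ∈ torsion2 := by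
    rw [iterate_succ_apply]
    exact (h.mapsTo_torsion2 hg).iterate m hgz
  intro hper
  rw [← h.iterate_right (m + 1) z] at hper
  exact hz (mem_torsion2_of_piQ_eq_piQ hper.symm hgnz)

/-- For a Lattès map `f : Q → Q` with lift a covering map
`f̃ : 𝕋² → 𝕋²` all of whose fibers have exactly `d > 1` elements, no critical
point of `f` (a point on no neighborhood of which `f` is injective) is
periodic. -/
theorem lattes_critical_points_not_periodic
    (f : Q → Q) (hf : Continuous f)
    (ftilde : Torus → Torus) (hcov : IsCoveringMap ftilde)
    (d : ℕ) (hd : 1 < d)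
    (hfib : ∀ z : Torus, (ftilde ⁻¹' {z}).ncard = d)
    (hsemi : ∀ z : Torus, piQ (ftilde z) = f (piQ z))
    (q : Q) (hcrit : ∀ U ∈ nhds q, ¬ Set.InjOn f U)
    (n : ℕ) (hn : 1 ≤ n) :
    f^[n] q ≠ q :=
  lattes_critical_points_not_periodic_general f ftilde hcov hsemi q hcrit n hn
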